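/- Let G be a torsion group (every element of G has finite order) and let H be a weakly maximal subgroup of G. Then H is self-normalizing: the normalizer of H in G equals H. -/

import Mathlib

/-- A subgroup `H` of a group `G` is weakly maximal if it has infinite index and every
subgroup strictly containing it has finite index. -/
def IsWeaklyMaximal {G : Type*} [Group G] (H : Subgroup G) : Prop :=
  H.index = 0 ∧ ∀ M : Subgroup G, H < M → M.index ≠ 0

/-! If `g` normalizes `H` and has finite order, then `H` has finite index in `⟨g⟩H`: by the second
isomorphism theorem `⟨g⟩H / H ≅ ⟨g⟩ / (⟨g⟩ ∩ H)`, which is finite. So a proper overgroup of `H`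
of finite index would exist, contradicting that `H` has infinite index in `G`. -/

namespace Subgroup

variable {G : Type*} [Group G]

theorem relIndex_sup_left_of_le_normalizer {H N : Subgroup G} (hHN : H ≤ normalizer (N : Set G)) :
    N.relIndex (H ⊔ N) = N.relIndex H := by
  have := normal_subgroupOf_of_le_normalizer hHN
  have := normal_subgroupOf_sup_of_le_normalizer hHN
  exact Nat.card_congr (QuotientGroup.quotientInfEquivProdNormalizerQuotient H N hHN).toEquiv.symm

theorem relIndex_zpowers_sup_ne_zero {H : Subgroup G} {g : G} (hg : IsOfFinOrder g)
    (hgH : g ∈ normalizer (H : Set G)) : H.relIndex (zpowers g ⊔ H) ≠ 0 := by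
  rw [relIndex_sup_left_of_le_normalizer (zpowers_le.mpr hgH)]
  have : Finite (zpowers g) := hg.finite_zpowers
  exact index_ne_zero_of_finite

end Subgroup

theorem weaklyMaximal_selfNormalizing {G : Type*} [Group G]
    (htor : ∀ g : G, IsOfFinOrder g) (H : Subgroup G) (hH : IsWeaklyMaximal H) :
    Subgroup.normalizer (H : Set G) = H := by
  refine le_antisymm (fun g hgN => ?_) H.le_normalizer
  by_contra hgH
  have hlt : H < Subgroup.zpowers g ⊔ H :=
    lt_of_le_of_ne le_sup_right fun h => hgH (h ▸ Subgroup.mem_sup_left (Subgroup.mem_zpowers g))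
  have hindex := Subgroup.relIndex_mul_index (le_sup_right : H ≤ Subgroup.zpowers g ⊔ H)
  rw [hH.1] at hindex
  exact mul_ne_zero (Subgroup.relIndex_zpowers_sup_ne_zero (htor g) hgN) (hH.2 _ hlt) hindex
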